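/- Let d ∈ (0,1], s ∈ (1/2,1) and N ≥ 1 + d. Set a₀ = (N/(2d))^{1/s} and for each positive integer n define Z_n = {a ≥ 1 : |a − nN| ≤ d·a^s}. Then for every positive integer n, Z_n ∩ Z_{n+1} = ∅ if and only if nN < a₀ − N/2, equivalently if and only if n + 1/2 < N^{(1/s)−1}/(2d)^{1/s}. -/

import Mathlib

/-!
Write `a₀ = (N/(2d))^{1/s}`, so that `d·a₀^s = N/2`. Adding the two defining inequalities of a
point `a` of `Z_c ∩ Z_{c+N}` gives `N ≤ 2d·a^s`, i.e. `a₀ ≤ a`, and the first one gives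
`a - d·a^s ≤ c`. Since `a ↦ a - d·a^s` is monotone on `[1, ∞)` (for `d ≤ 1`, `s ≤ 1`) and
`a₀ ≥ 1`, this forces `a₀ - N/2 ≤ c`. Conversely, if `a₀ - N/2 ≤ c` then the midpoint
`c + N/2 ≥ a₀` lies in both supports. The second equivalence is division by `N`.
-/

open Real Set

/-- The paper's `Z_n` is `waveSupport d s (n * N)`. -/
def waveSupport (d s c : ℝ) : Set ℝ := {a | 1 ≤ a ∧ |a - c| ≤ d * a ^ s}

lemma rpow_sub_rpow_le_sub {s a b : ℝ} (hs : s ≤ 1) (hb : 1 ≤ b) (hab : b ≤ a) :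
    a ^ s - b ^ s ≤ a - b := by
  have hb0 : 0 < b := by linarith
  have ha0 : 0 < a := by linarith
  have hs' : s - 1 ≤ 0 := by linarith
  have self_mul (x : ℝ) (hx : 0 < x) : x * x ^ (s - 1) = x ^ s := by
    rw [rpow_sub_one hx.ne', mul_div_cancel₀ _ hx.ne']
  calc a ^ s - b ^ s
      ≤ a * b ^ (s - 1) - b * b ^ (s - 1) := by
        rw [← self_mul a ha0, ← self_mul b hb0]
        exact sub_le_sub_right
          (mul_le_mul_of_nonneg_left (rpow_le_rpow_of_nonpos hb0 hab hs') ha0.le) _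
    _ = (a - b) * b ^ (s - 1) := by ring
    _ ≤ a - b := mul_le_of_le_one_right (by linarith) (rpow_le_one_of_one_le_of_nonpos hb hs')

lemma monotoneOn_sub_mul_rpow {d s : ℝ} (hd : 0 ≤ d) (hd1 : d ≤ 1) (hs : s ≤ 1) :
    MonotoneOn (fun a : ℝ => a - d * a ^ s) (Ici 1) := by
  intro b hb a _ hab
  have := rpow_sub_rpow_le_sub hs hb hab
  simp only
  nlinarith

section Threshold

variable {d s N : ℝ}

/-- The paper's `a₀`, the scale at which the support radius `d·a^s` reaches `N/2`. -/
noncomputable def resolutionThreshold (d s N : ℝ) : ℝ := (N / (2 * d)) ^ (1 / s)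

lemma mul_resolutionThreshold_rpow (hd : 0 < d) (hN : 0 ≤ N) (hs : s ≠ 0) :
    d * resolutionThreshold d s N ^ s = N / 2 := by
  rw [resolutionThreshold, one_div, rpow_inv_rpow (by positivity) hs]
  field_simp

lemma one_le_resolutionThreshold (hd : 0 < d) (hs : 0 < s) (hN : 2 * d ≤ N) :
    1 ≤ resolutionThreshold d s N :=
  one_le_rpow ((one_le_div (by positivity)).2 hN) (by positivity)

lemma resolutionThreshold_le_iff (hd : 0 < d) (hN : 0 ≤ N) (hs : 0 < s) {a : ℝ} (ha : 0 ≤ a) :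
    resolutionThreshold d s N ≤ a ↔ N / 2 ≤ d * a ^ s := by
  rw [resolutionThreshold, one_div, rpow_inv_le_iff_of_pos (by positivity) ha hs,
    div_le_iff₀ (by positivity)]
  constructor <;> intro h <;> linarith

end Threshold

lemma disjoint_waveSupport_add_iff {d s N : ℝ} (hd : 0 < d) (hd1 : d ≤ 1) (hs : 0 < s)
    (hs1 : s ≤ 1) (hN : 2 * d ≤ N) (c : ℝ) :
    Disjoint (waveSupport d s c) (waveSupport d s (c + N)) ↔
      c < resolutionThreshold d s N - N / 2 := by
  have hN0 : 0 ≤ N := by linarith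
  have h₀ := one_le_resolutionThreshold hd hs hN
  rw [← not_iff_not, not_disjoint_iff, not_lt]
  constructor
  · rintro ⟨a, ⟨ha, hac⟩, -, hacN⟩
    rw [abs_le] at hac hacN
    have ha₀ : resolutionThreshold d s N ≤ a :=
      (resolutionThreshold_le_iff hd hN0 hs (by linarith)).2 (by linarith)
    calc resolutionThreshold d s N - N / 2
        = resolutionThreshold d s N - d * resolutionThreshold d s N ^ s := by
          rw [mul_resolutionThreshold_rpow hd hN0 hs.ne']
      _ ≤ a - d * a ^ s := monotoneOn_sub_mul_rpow hd.le hd1 hs1 h₀ ha ha₀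
      _ ≤ c := by linarith
  · intro hc
    have ha₀ : resolutionThreshold d s N ≤ c + N / 2 := by linarith
    have hrad := (resolutionThreshold_le_iff hd hN0 hs (by linarith)).1 ha₀
    have ha : 1 ≤ c + N / 2 := h₀.trans ha₀
    refine ⟨c + N / 2, ⟨ha, ?_⟩, ha, ?_⟩ <;> rw [abs_le] <;> constructor <;> linarith

lemma lt_div_rpow_sub_half_iff {x N B p : ℝ} (hN : 0 < N) (hB : 0 < B) :
    x * N < (N / B) ^ p - N / 2 ↔ x + 1 / 2 < N ^ (p - 1) / B ^ p := by
  rw [div_rpow hN.le hB.le, rpow_sub_one hN.ne', div_right_comm, lt_div_iff₀ hN]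
  constructor <;> intro h <;> linarith

/-- multiscale resolution of the synchrosqueezed wave packet transform:
with `a₀ = (N/(2d))^{1/s}` and `Z_n = {a ≥ 1 : |a − nN| ≤ d·a^s}`, consecutive supports
`Z_n` and `Z_{n+1}` are disjoint iff `nN < a₀ − N/2`, equivalently iff
`n + 1/2 < N^{1/s−1}/(2d)^{1/s}`. -/
theorem sswpt_multiscale_resolution
    (d s N : ℝ) (hd : 0 < d) (hd1 : d ≤ 1) (hs : 1 / 2 < s) (hs1 : s < 1) (hN : 1 + d ≤ N) :
    ∀ n : ℕ, 0 < n →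
      (Disjoint {a : ℝ | 1 ≤ a ∧ |a - (n : ℝ) * N| ≤ d * a ^ s}
          {a : ℝ | 1 ≤ a ∧ |a - ((n : ℝ) + 1) * N| ≤ d * a ^ s}
        ↔ (n : ℝ) * N < (N / (2 * d)) ^ (1 / s) - N / 2) ∧
      ((n : ℝ) * N < (N / (2 * d)) ^ (1 / s) - N / 2
        ↔ (n : ℝ) + 1 / 2 < N ^ (1 / s - 1) / (2 * d) ^ (1 / s)) := by
  intro n _
  refine ⟨?_, lt_div_rpow_sub_half_iff (by linarith) (by linarith)⟩
  have h := disjoint_waveSupport_add_iff hd hd1 (by linarith) hs1.le (by linarith) ((n : ℝ) * N)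
  rwa [← add_one_mul] at h
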